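/- arXiv:1811.12523 — 5 statements merged into one kernel-verified Lean document; each statement's English description precedes it below -/
import Mathlib

section
/- Let n > 0 and let F ∈ M₆(ℝ) be the Clohessy–Wiltshire system matrix and Φ(t) ∈ M₆(ℝ) the Clohessy–Wiltshire state-transition matrix. Then for every t ∈ ℝ, Φ(t) = exp(tF), the matrix exponential of tF. -/
/-!
Writing `Φ(t) = cos(nt) C + sin(nt) S + t T + Z` with constant matrices `C, S, T, Z`, the
relations `F C = n S`, `F S = -n C`, `F T = 0`, `F Z = T` say exactly that `Φ' = F Φ`; together
with `Φ(0) = 1` this forces `Φ(t) = exp(tF)`, because `exp(-tF) Φ(t)` has zero derivative.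
-/

open Real Matrix

/-- Position-position block of the Clohessy–Wiltshire state-transition matrix. -/
noncomputable def phiRR (n t : ℝ) : Matrix (Fin 3) (Fin 3) ℝ :=
  !![4 - 3 * Real.cos (n * t), 0, 0;
     6 * (Real.sin (n * t) - n * t), 1, 0;
     0, 0, Real.cos (n * t)]

/-- Position-velocity block of the Clohessy–Wiltshire state-transition matrix. -/
noncomputable def phiRV (n t : ℝ) : Matrix (Fin 3) (Fin 3) ℝ :=
  (1 / n) • !![Real.sin (n * t), 2 * (1 - Real.cos (n * t)), 0;
               -2 * (1 - Real.cos (n * t)), 4 * Real.sin (n * t) - 3 * (n * t), 0;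
               0, 0, Real.sin (n * t)]

/-- Velocity-position block of the Clohessy–Wiltshire state-transition matrix. -/
noncomputable def phiVR (n t : ℝ) : Matrix (Fin 3) (Fin 3) ℝ :=
  n • !![3 * Real.sin (n * t), 0, 0;
         -6 * (1 - Real.cos (n * t)), 0, 0;
         0, 0, -Real.sin (n * t)]

/-- Velocity-velocity block of the Clohessy–Wiltshire state-transition matrix. -/
noncomputable def phiVV (n t : ℝ) : Matrix (Fin 3) (Fin 3) ℝ :=
  !![Real.cos (n * t), 2 * Real.sin (n * t), 0;
     -2 * Real.sin (n * t), 4 * Real.cos (n * t) - 3, 0;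
     0, 0, Real.cos (n * t)]

/-- The full 6×6 Clohessy–Wiltshire state-transition matrix. -/
noncomputable def cwPhi (n t : ℝ) : Matrix (Fin 3 ⊕ Fin 3) (Fin 3 ⊕ Fin 3) ℝ :=
  Matrix.fromBlocks (phiRR n t) (phiRV n t) (phiVR n t) (phiVV n t)

/-- The Clohessy–Wiltshire system matrix `F = [[0, I],[A, B]]`. -/
noncomputable def cwF (n : ℝ) : Matrix (Fin 3 ⊕ Fin 3) (Fin 3 ⊕ Fin 3) ℝ :=
  Matrix.fromBlocks 0 1
    !![3 * n ^ 2, 0, 0; 0, 0, 0; 0, 0, -n ^ 2]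
    !![0, 2 * n, 0; -2 * n, 0, 0; 0, 0, 0]

section

variable {𝔸 : Type*} [NormedRing 𝔸] [NormedAlgebra ℝ 𝔸]

theorem eq_exp_smul_of_hasDerivAt_mul [CompleteSpace 𝔸] {F : 𝔸} {Φ : ℝ → 𝔸}
    (hΦ : ∀ t, HasDerivAt Φ (F * Φ t) t) (hΦ0 : Φ 0 = 1) (t : ℝ) :
    Φ t = NormedSpace.exp (t • F) := by
  -- `NormedSpace.exp_add_of_commute` is stated for `ℚ`-algebras
  let : NormedAlgebra ℚ 𝔸 := .restrictScalars ℚ ℝ 𝔸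
  have hderiv : ∀ s, HasDerivAt (fun s ↦ NormedSpace.exp (s • -F) * Φ s) 0 s := fun s ↦ by
    refine ((hasDerivAt_exp_smul_const (-F) s).mul (hΦ s)).congr_deriv ?_
    simp [mul_assoc]
  have hconst : NormedSpace.exp (t • -F) * Φ t = 1 := by
    simpa [hΦ0] using is_const_of_deriv_eq_zero (fun s ↦ (hderiv s).differentiableAt)
      (fun s ↦ (hderiv s).deriv) t 0
  have hinv : NormedSpace.exp (t • F) * NormedSpace.exp (t • -F) = 1 := by
    rw [← NormedSpace.exp_add_of_commute ((Commute.refl F).neg_right.smul_left t |>.smul_right t)]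
    simp
  calc Φ t = NormedSpace.exp (t • F) * NormedSpace.exp (t • -F) * Φ t := by rw [hinv, one_mul]
    _ = NormedSpace.exp (t • F) := by rw [mul_assoc, hconst, mul_one]

theorem hasDerivAt_cos_smul_add_sin_smul_add_smul_add {ω : ℝ} {F C S T Z : 𝔸}
    (hC : F * C = ω • S) (hS : F * S = -ω • C) (hT : F * T = 0) (hZ : F * Z = T) (t : ℝ) :
    HasDerivAt (fun t ↦ cos (ω * t) • C + sin (ω * t) • S + t • T + Z)
      (F * (cos (ω * t) • C + sin (ω * t) • S + t • T + Z)) t := by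
  have hcos := ((hasDerivAt_id' t).const_mul ω).cos
  have hsin := ((hasDerivAt_id' t).const_mul ω).sin
  refine ((((hcos.smul_const C).add (hsin.smul_const S)).add
    ((hasDerivAt_id' t).smul_const T)).add_const Z).congr_deriv ?_
  simp only [mul_add, mul_smul_comm, hC, hS, hT, hZ, smul_zero]
  module

end

noncomputable def cwCos (n : ℝ) : Matrix (Fin 3 ⊕ Fin 3) (Fin 3 ⊕ Fin 3) ℝ :=
  fromBlocks !![-3, 0, 0; 0, 0, 0; 0, 0, 1] !![0, -2 / n, 0; 2 / n, 0, 0; 0, 0, 0]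
    !![0, 0, 0; 6 * n, 0, 0; 0, 0, 0] !![1, 0, 0; 0, 4, 0; 0, 0, 1]

noncomputable def cwSin (n : ℝ) : Matrix (Fin 3 ⊕ Fin 3) (Fin 3 ⊕ Fin 3) ℝ :=
  fromBlocks !![0, 0, 0; 6, 0, 0; 0, 0, 0] !![1 / n, 0, 0; 0, 4 / n, 0; 0, 0, 1 / n]
    !![3 * n, 0, 0; 0, 0, 0; 0, 0, -n] !![0, 2, 0; -2, 0, 0; 0, 0, 0]

noncomputable def cwSecular (n : ℝ) : Matrix (Fin 3 ⊕ Fin 3) (Fin 3 ⊕ Fin 3) ℝ :=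
  fromBlocks !![0, 0, 0; -6 * n, 0, 0; 0, 0, 0] !![0, 0, 0; 0, -3, 0; 0, 0, 0] 0 0

noncomputable def cwConst (n : ℝ) : Matrix (Fin 3 ⊕ Fin 3) (Fin 3 ⊕ Fin 3) ℝ :=
  fromBlocks !![4, 0, 0; 0, 1, 0; 0, 0, 0] !![0, 2 / n, 0; -2 / n, 0, 0; 0, 0, 0]
    !![0, 0, 0; -6 * n, 0, 0; 0, 0, 0] !![0, 0, 0; 0, -3, 0; 0, 0, 0]

section

variable {n : ℝ}

theorem cwPhi_eq_cos_smul_add_sin_smul_add_smul_add (hn : n ≠ 0) (t : ℝ) :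
    cwPhi n t =
      cos (n * t) • cwCos n + sin (n * t) • cwSin n + t • cwSecular n + cwConst n := by
  ext (i | i) (j | j) <;> fin_cases i <;> fin_cases j <;>
    simp [cwPhi, phiRR, phiRV, phiVR, phiVV, cwCos, cwSin, cwSecular, cwConst] <;>
    field_simp <;> ring

theorem cwF_mul_cwCos (hn : n ≠ 0) : cwF n * cwCos n = n • cwSin n := by
  ext (i | i) (j | j) <;> fin_cases i <;> fin_cases j <;>
    simp [cwF, cwCos, cwSin, mul_apply, Fin.sum_univ_three] <;> field_simp <;> ring

theorem cwF_mul_cwSin (hn : n ≠ 0) : cwF n * cwSin n = -n • cwCos n := by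
  ext (i | i) (j | j) <;> fin_cases i <;> fin_cases j <;>
    simp [cwF, cwCos, cwSin, mul_apply, Fin.sum_univ_three] <;> field_simp <;> ring

theorem cwF_mul_cwSecular : cwF n * cwSecular n = 0 := by
  ext (i | i) (j | j) <;> fin_cases i <;> fin_cases j <;>
    simp [cwF, cwSecular, mul_apply, Fin.sum_univ_three]

theorem cwF_mul_cwConst : cwF n * cwConst n = cwSecular n := by
  ext (i | i) (j | j) <;> fin_cases i <;> fin_cases j <;>
    simp [cwF, cwConst, cwSecular, mul_apply, Fin.sum_univ_three] <;> field_simp <;> ring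

end

theorem cwPhi_zero (n : ℝ) : cwPhi n 0 = 1 := by
  ext (i | i) (j | j) <;> fin_cases i <;> fin_cases j <;>
    simp [cwPhi, phiRR, phiRV, phiVR, phiVV, one_apply] <;> norm_num

theorem cwPhi_eq_exp (n : ℝ) (hn : 0 < n) :
    ∀ t : ℝ, cwPhi n t = NormedSpace.exp (t • cwF n) := by
  let : NormedRing (Matrix (Fin 3 ⊕ Fin 3) (Fin 3 ⊕ Fin 3) ℝ) := Matrix.linftyOpNormedRing
  let : NormedAlgebra ℝ (Matrix (Fin 3 ⊕ Fin 3) (Fin 3 ⊕ Fin 3) ℝ) :=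
    Matrix.linftyOpNormedAlgebra
  have hΦ : cwPhi n = fun t ↦
      cos (n * t) • cwCos n + sin (n * t) • cwSin n + t • cwSecular n + cwConst n :=
    funext (cwPhi_eq_cos_smul_add_sin_smul_add_smul_add hn.ne')
  refine eq_exp_smul_of_hasDerivAt_mul (fun t ↦ ?_) (cwPhi_zero n)
  rw [hΦ]
  exact hasDerivAt_cos_smul_add_sin_smul_add_smul_add (cwF_mul_cwCos hn.ne')
    (cwF_mul_cwSin hn.ne') cwF_mul_cwSecular cwF_mul_cwConst t
end

section
/- Let n > 0 and let x, y, z : ℝ → ℝ be twice differentiable functions satisfying the Clohessy–Wiltshire equations ẍ(t) = 3n²x(t) + 2nẏ(t), ÿ(t) = −2nẋ(t), and z̈(t) = −n²z(t) for all t ∈ ℝ. Then for all t ∈ ℝ, the state vector (x(t), y(t), z(t), ẋ(t), ẏ(t), ż(t)) ∈ ℝ⁶ equals Φ(t) applied to the initial state vector (x(0), y(0), z(0), ẋ(0), ẏ(0), ż(0)), where Φ(t) is the Clohessy–Wiltshire state-transition matrix. -/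
/-!
The out-of-plane coordinate `z` is a harmonic oscillator of frequency `n`. In the orbital plane,
`ẏ + 2 n x` is a first integral `c`; eliminating `ẏ` with it turns the radial equation into
`ẍ = -n² (x - 2c/n)`, a harmonic oscillator centred at `2c/n`. This gives `x` and `ẋ`, then `ẏ`
from the first integral, and `y` by integrating `ẏ`. Every closed form is obtained from a quantity
with vanishing derivative, hence constant.
-/

open Real Matrix

theorem is_const_of_hasDerivAt_zero {E : Type*} [NormedAddCommGroup E] [NormedSpace ℝ E]
    {f : ℝ → E} (hf : ∀ t, HasDerivAt f 0 t) (a b : ℝ) : f a = f b :=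
  is_const_of_deriv_eq_zero (fun t ↦ (hf t).differentiableAt) (fun t ↦ (hf t).deriv) a b

theorem hasDerivAt_sin_mul (ω t : ℝ) : HasDerivAt (fun s ↦ sin (ω * s)) (ω * cos (ω * t)) t := by
  simpa [mul_comm] using ((hasDerivAt_id t).const_mul ω).sin

theorem hasDerivAt_cos_mul (ω t : ℝ) : HasDerivAt (fun s ↦ cos (ω * s)) (-ω * sin (ω * t)) t := by
  simpa [mul_comm] using ((hasDerivAt_id t).const_mul ω).cos

section HarmonicOscillator

variable {ω : ℝ} {u v : ℝ → ℝ}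
  (hu : ∀ t, HasDerivAt u (v t) t) (hv : ∀ t, HasDerivAt v (-ω ^ 2 * u t) t)
include hu hv

/-- The phase-space point `(ω u, v)`, rotated back by the angle `ω t`, is constant in time. -/
theorem harmonicOscillator_rotated_const (t : ℝ) :
    ω * u t * cos (ω * t) - v t * sin (ω * t) = ω * u 0 ∧
      ω * u t * sin (ω * t) + v t * cos (ω * t) = v 0 := by
  constructor
  · have := is_const_of_hasDerivAt_zero (fun s ↦
      ((((hu s).const_mul ω).mul (hasDerivAt_cos_mul ω s)).sub
        ((hv s).mul (hasDerivAt_sin_mul ω s))).congr_deriv (by ring)) t 0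
    simpa using this
  · have := is_const_of_hasDerivAt_zero (fun s ↦
      ((((hu s).const_mul ω).mul (hasDerivAt_sin_mul ω s)).add
        ((hv s).mul (hasDerivAt_cos_mul ω s))).congr_deriv (by ring)) t 0
    simpa using this

theorem harmonicOscillator_eq (hω : ω ≠ 0) (t : ℝ) :
    u t = cos (ω * t) * u 0 + sin (ω * t) / ω * v 0 ∧
      v t = -ω * sin (ω * t) * u 0 + cos (ω * t) * v 0 := by
  obtain ⟨hA, hB⟩ := harmonicOscillator_rotated_const hu hv t
  have hpyth := sin_sq_add_cos_sq (ω * t)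
  constructor
  · field_simp
    linear_combination cos (ω * t) * hA + sin (ω * t) * hB - ω * u t * hpyth
  · linear_combination cos (ω * t) * hB - sin (ω * t) * hA - v t * hpyth

end HarmonicOscillator

section InPlane

variable {n : ℝ} {x y x' y' : ℝ → ℝ}
  (hx : ∀ t, HasDerivAt x (x' t) t)
  (hx' : ∀ t, HasDerivAt x' (3 * n ^ 2 * x t + 2 * n * y' t) t)
  (hy' : ∀ t, HasDerivAt y' (-2 * n * x' t) t)
include hx hy'

theorem cw_alongTrack_momentum_const (t : ℝ) : y' t + 2 * n * x t = y' 0 + 2 * n * x 0 :=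
  is_const_of_hasDerivAt_zero (fun s ↦
    ((hy' s).add ((hx s).const_mul (2 * n))).congr_deriv (by ring)) t 0

include hx'

theorem cw_radial_eq (hn : n ≠ 0) (t : ℝ) :
    x t = (4 - 3 * cos (n * t)) * x 0 + sin (n * t) / n * x' 0
        + 2 * (1 - cos (n * t)) / n * y' 0 ∧
      x' t = 3 * n * sin (n * t) * x 0 + cos (n * t) * x' 0 + 2 * sin (n * t) * y' 0 := by
  have hmomentum := cw_alongTrack_momentum_const hx hy'
  generalize hc : y' 0 + 2 * n * x 0 = c at hmomentum
  have hu : ∀ s, HasDerivAt (fun s ↦ x s - 2 * c / n) (x' s) s := fun s ↦ (hx s).sub_const _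
  have hv : ∀ s, HasDerivAt x' (-n ^ 2 * (x s - 2 * c / n)) s := fun s ↦
    (hx' s).congr_deriv (by field_simp; linear_combination 2 * hmomentum s)
  obtain ⟨hxt, hx't⟩ := harmonicOscillator_eq hu hv hn t
  constructor
  · field_simp at hxt ⊢
    linear_combination hxt - 2 * (1 - cos (n * t)) * hc
  · field_simp at hx't ⊢
    linear_combination hx't - 2 * sin (n * t) * hc

theorem cw_alongTrack_velocity_eq (hn : n ≠ 0) (t : ℝ) :
    y' t = -6 * n * (1 - cos (n * t)) * x 0 - 2 * sin (n * t) * x' 0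
      + (4 * cos (n * t) - 3) * y' 0 := by
  have hxt := (cw_radial_eq hx hx' hy' hn t).1
  field_simp at hxt
  linear_combination cw_alongTrack_momentum_const hx hy' t - 2 * hxt

theorem cw_alongTrack_eq (hn : n ≠ 0) (hy : ∀ t, HasDerivAt y (y' t) t) (t : ℝ) :
    y t = 6 * (sin (n * t) - n * t) * x 0 + y 0 - 2 * (1 - cos (n * t)) / n * x' 0
      + (4 * sin (n * t) - 3 * (n * t)) / n * y' 0 := by
  have hY : ∀ s, HasDerivAt (fun s ↦ 6 * (sin (n * s) - n * s) * x 0 + y 0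
      - 2 * (1 - cos (n * s)) / n * x' 0 + (4 * sin (n * s) - 3 * (n * s)) / n * y' 0) (y' s) s := by
    intro s
    have hlin : HasDerivAt (fun s ↦ n * s) n s := by simpa using (hasDerivAt_id s).const_mul n
    refine ((((((hasDerivAt_sin_mul n s).sub hlin).const_mul 6).mul_const (x 0)).add_const (y 0)).sub
      (((((hasDerivAt_cos_mul n s).const_sub 1).const_mul 2).div_const n).mul_const (x' 0))).add
      (((((hasDerivAt_sin_mul n s).const_mul 4).sub (hlin.const_mul 3)).div_const n).mul_const (y' 0))
      |>.congr_deriv ?_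
    rw [cw_alongTrack_velocity_eq hx hx' hy' hn s]
    field_simp
    ring
  have := is_const_of_hasDerivAt_zero (fun s ↦ ((hy s).sub (hY s)).congr_deriv (sub_self _)) t 0
  simp only [Pi.sub_apply, mul_zero, sin_zero, cos_zero] at this
  linear_combination this

end InPlane

theorem cwPhi_mulVec (n t a b c d e f : ℝ) :
    cwPhi n t *ᵥ Sum.elim ![a, b, c] ![d, e, f] =
      Sum.elim
        ![(4 - 3 * cos (n * t)) * a + sin (n * t) / n * d + 2 * (1 - cos (n * t)) / n * e,
          6 * (sin (n * t) - n * t) * a + b - 2 * (1 - cos (n * t)) / n * d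
            + (4 * sin (n * t) - 3 * (n * t)) / n * e,
          cos (n * t) * c + sin (n * t) / n * f]
        ![3 * n * sin (n * t) * a + cos (n * t) * d + 2 * sin (n * t) * e,
          -6 * n * (1 - cos (n * t)) * a - 2 * sin (n * t) * d + (4 * cos (n * t) - 3) * e,
          -n * sin (n * t) * c + cos (n * t) * f] := by
  ext (i | i) <;> fin_cases i <;>
    simp [cwPhi, phiRR, phiRV, phiVR, phiVV, fromBlocks_mulVec] <;> ring

theorem cw_state_transition (n : ℝ) (hn : 0 < n)
    (x y z x' y' z' x'' y'' z'' : ℝ → ℝ)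
    (hx : ∀ t, HasDerivAt x (x' t) t) (hy : ∀ t, HasDerivAt y (y' t) t)
    (hz : ∀ t, HasDerivAt z (z' t) t)
    (hx' : ∀ t, HasDerivAt x' (x'' t) t) (hy' : ∀ t, HasDerivAt y' (y'' t) t)
    (hz' : ∀ t, HasDerivAt z' (z'' t) t)
    (hxeq : ∀ t, x'' t = 3 * n ^ 2 * x t + 2 * n * y' t)
    (hyeq : ∀ t, y'' t = -2 * n * x' t)
    (hzeq : ∀ t, z'' t = -n ^ 2 * z t) :
    ∀ t : ℝ,
      (Sum.elim ![x t, y t, z t] ![x' t, y' t, z' t] : Fin 3 ⊕ Fin 3 → ℝ) =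
        cwPhi n t *ᵥ Sum.elim ![x 0, y 0, z 0] ![x' 0, y' 0, z' 0] := by
  intro t
  replace hx' := fun t ↦ hxeq t ▸ hx' t
  replace hy' := fun t ↦ hyeq t ▸ hy' t
  replace hz' := fun t ↦ hzeq t ▸ hz' t
  obtain ⟨hxt, hx't⟩ := cw_radial_eq hx hx' hy' hn.ne' t
  obtain ⟨hzt, hz't⟩ := harmonicOscillator_eq hz hz' hn.ne' t
  rw [cwPhi_mulVec, hxt, hx't, cw_alongTrack_eq hx hx' hy' hn.ne' hy t,
    cw_alongTrack_velocity_eq hx hx' hy' hn.ne' t, hzt, hz't]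
end

section
/- Let F, Q, S ∈ Mₙ(ℝ) and let Λ ∈ M₂ₙ(ℝ) be the block matrix [[F, Q],[S, −Fᵀ]]. For t ∈ ℝ write exp(tΛ) in n×n blocks as [[Θ₁₁(t), Θ₁₂(t)],[Θ₂₁(t), Θ₂₂(t)]]. Let P₀ ∈ Mₙ(ℝ) and let I ⊆ ℝ be an open interval containing 0 on which Y(t) := Θ₂₁(t)P₀ + Θ₂₂(t) is invertible. Then P(t) := (Θ₁₁(t)P₀ + Θ₁₂(t))·Y(t)⁻¹ satisfies P(0) = P₀ and, for every t ∈ I, P is differentiable at t with P′(t) = F·P(t) + P(t)·Fᵀ + Q − P(t)·S·P(t). -/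
/-!
The pair `X(t) = Θ₁₁(t) P₀ + Θ₁₂(t)`, `Y(t) = Θ₂₁(t) P₀ + Θ₂₂(t)` is `exp (tΛ)` applied to the
columns `[P₀; 1]`, so it solves the linear Hamiltonian system `X' = F X + Q Y`, `Y' = S X - Fᵀ Y`.
Differentiating `P = X Y⁻¹` with the product rule and `(Y⁻¹)' = -Y⁻¹ Y' Y⁻¹` turns this linear
system into the Riccati equation for `P`.
-/

open Matrix

section Sup

attribute [local instance] Matrix.normedAddCommGroup

theorem HasDerivAt.matrix_submatrix {l m n o : Type*} [Fintype l] [Fintype m] [Fintype n]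
    [Fintype o] {M : ℝ → Matrix m n ℝ} {M' : Matrix m n ℝ} {t : ℝ} (h : HasDerivAt M M' t)
    (r : l → m) (c : o → n) :
    HasDerivAt (fun s => (M s).submatrix r c) (M'.submatrix r c) t :=
  hasDerivAt_pi.2 fun i => hasDerivAt_pi.2 fun j =>
    hasDerivAt_pi.1 (hasDerivAt_pi.1 h (r i)) (c j)

theorem HasDerivAt.of_fromBlocks {m n : Type*} [Fintype m] [Fintype n]
    {A : ℝ → Matrix m m ℝ} {B : ℝ → Matrix m n ℝ} {C : ℝ → Matrix n m ℝ} {D : ℝ → Matrix n n ℝ}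
    {A' : Matrix m m ℝ} {B' : Matrix m n ℝ} {C' : Matrix n m ℝ} {D' : Matrix n n ℝ} {t : ℝ}
    (h : HasDerivAt (fun s => fromBlocks (A s) (B s) (C s) (D s)) (fromBlocks A' B' C' D') t) :
    HasDerivAt A A' t ∧ HasDerivAt B B' t ∧ HasDerivAt C C' t ∧ HasDerivAt D D' t :=
  ⟨h.matrix_submatrix Sum.inl Sum.inl, h.matrix_submatrix Sum.inl Sum.inr,
    h.matrix_submatrix Sum.inr Sum.inl, h.matrix_submatrix Sum.inr Sum.inr⟩

end Sup

section LinftyOp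

/- The entrywise sup norm is not submultiplicative; the `linftyOp` operator norm induces the same
topology, hence the same derivatives, and makes square matrices a complete normed algebra. -/
attribute [local instance] Matrix.linftyOpNormedRing Matrix.linftyOpNormedAlgebra

variable {n : Type*} [Fintype n] [DecidableEq n] {t : ℝ}

theorem HasDerivAt.matrix_inv {Y : ℝ → Matrix n n ℝ} {Y' : Matrix n n ℝ}
    (hY : HasDerivAt Y Y' t) (hu : IsUnit (Y t)) :
    HasDerivAt (fun s => (Y s)⁻¹) (-((Y t)⁻¹ * Y' * (Y t)⁻¹)) t := by
  obtain ⟨u, hu⟩ := hu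
  have h : HasFDerivAt Ring.inverse _ (Y t) := hu ▸ hasFDerivAt_ringInverse (𝕜 := ℝ) u
  simp only [nonsing_inv_eq_ringInverse, ← hu, Ring.inverse_unit]
  exact (h.comp_hasDerivAt t hY).congr_deriv (by simp)

theorem hasDerivAt_mul_inv_of_linear_system {X Y : ℝ → Matrix n n ℝ} {A B C D : Matrix n n ℝ}
    (hX : HasDerivAt X (A * X t + B * Y t) t) (hY : HasDerivAt Y (C * X t + D * Y t) t)
    (hu : IsUnit (Y t)) :
    HasDerivAt (fun s => X s * (Y s)⁻¹)
      (A * (X t * (Y t)⁻¹) + B - X t * (Y t)⁻¹ * C * (X t * (Y t)⁻¹) - X t * (Y t)⁻¹ * D) t := by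
  have hYY : Y t * (Y t)⁻¹ = 1 := mul_nonsing_inv _ ((isUnit_iff_isUnit_det _).1 hu)
  refine (hX.mul (hY.matrix_inv hu)).congr_deriv ?_
  linear_combination (norm := noncomm_ring) B * hYY - X t * (Y t)⁻¹ * D * hYY

variable {A B C D : Matrix n n ℝ} {Θ₁₁ Θ₁₂ Θ₂₁ Θ₂₂ : ℝ → Matrix n n ℝ}

theorem hasDerivAt_exp_smul_fromBlocks
    (hΘ : ∀ s : ℝ, NormedSpace.exp (s • fromBlocks A B C D) =
      fromBlocks (Θ₁₁ s) (Θ₁₂ s) (Θ₂₁ s) (Θ₂₂ s)) (t : ℝ) :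
    HasDerivAt Θ₁₁ (A * Θ₁₁ t + B * Θ₂₁ t) t ∧ HasDerivAt Θ₁₂ (A * Θ₁₂ t + B * Θ₂₂ t) t ∧
      HasDerivAt Θ₂₁ (C * Θ₁₁ t + D * Θ₂₁ t) t ∧ HasDerivAt Θ₂₂ (C * Θ₁₂ t + D * Θ₂₂ t) t := by
  have h : HasDerivAt (fun s : ℝ => NormedSpace.exp (s • fromBlocks A B C D))
      (fromBlocks A B C D * NormedSpace.exp (t • fromBlocks A B C D)) t :=
    hasDerivAt_exp_smul_const' (𝕂 := ℝ) (fromBlocks A B C D) t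
  simp only [hΘ, fromBlocks_multiply] at h
  exact h.of_fromBlocks

theorem hasDerivAt_exp_smul_fromBlocks_mul_add (P₀ : Matrix n n ℝ)
    (hΘ : ∀ s : ℝ, NormedSpace.exp (s • fromBlocks A B C D) =
      fromBlocks (Θ₁₁ s) (Θ₁₂ s) (Θ₂₁ s) (Θ₂₂ s)) (t : ℝ) :
    HasDerivAt (fun s => Θ₁₁ s * P₀ + Θ₁₂ s)
        (A * (Θ₁₁ t * P₀ + Θ₁₂ t) + B * (Θ₂₁ t * P₀ + Θ₂₂ t)) t ∧
      HasDerivAt (fun s => Θ₂₁ s * P₀ + Θ₂₂ s)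
        (C * (Θ₁₁ t * P₀ + Θ₁₂ t) + D * (Θ₂₁ t * P₀ + Θ₂₂ t)) t := by
  obtain ⟨h₁₁, h₁₂, h₂₁, h₂₂⟩ := hasDerivAt_exp_smul_fromBlocks hΘ t
  exact ⟨((h₁₁.mul_const P₀).add h₁₂).congr_deriv (by noncomm_ring),
    ((h₂₁.mul_const P₀).add h₂₂).congr_deriv (by noncomm_ring)⟩

end LinftyOp

attribute [local instance] Matrix.normedAddCommGroup Matrix.normedSpace

theorem riccati_lft_solution_general (k : ℕ) (F Q S P0 : Matrix (Fin k) (Fin k) ℝ)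
    (I : Set ℝ)
    (Θ11 Θ12 Θ21 Θ22 : ℝ → Matrix (Fin k) (Fin k) ℝ)
    (hΘ : ∀ t : ℝ,
      NormedSpace.exp (t • Matrix.fromBlocks F Q S (-Fᵀ)) =
        Matrix.fromBlocks (Θ11 t) (Θ12 t) (Θ21 t) (Θ22 t))
    (hY : ∀ t ∈ I, IsUnit (Θ21 t * P0 + Θ22 t))
    (P : ℝ → Matrix (Fin k) (Fin k) ℝ)
    (hP : ∀ t : ℝ, P t = (Θ11 t * P0 + Θ12 t) * (Θ21 t * P0 + Θ22 t)⁻¹) :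
    P 0 = P0 ∧
      ∀ t ∈ I, HasDerivAt P (F * P t + P t * Fᵀ + Q - P t * S * P t) t := by
  refine ⟨?_, fun t ht => ?_⟩
  · obtain ⟨h₁₁, h₁₂, h₂₁, h₂₂⟩ := fromBlocks_inj.1 <| (hΘ 0).symm.trans <| by
      rw [zero_smul, NormedSpace.exp_zero, fromBlocks_one]
    simp [hP, h₁₁, h₁₂, h₂₁, h₂₂]
  · obtain ⟨hX, hY'⟩ := hasDerivAt_exp_smul_fromBlocks_mul_add P0 hΘ t
    have hRiccati : F * P t + P t * Fᵀ + Q - P t * S * P t =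
        F * P t + Q - P t * S * P t - P t * -Fᵀ := by
      noncomm_ring
    rw [hRiccati, funext hP]
    exact hasDerivAt_mul_inv_of_linear_system hX hY' (hY t ht)

theorem riccati_lft_solution (k : ℕ) (F Q S P0 : Matrix (Fin k) (Fin k) ℝ)
    (I : Set ℝ) (hIopen : IsOpen I) (hIconn : I.OrdConnected) (h0I : (0 : ℝ) ∈ I)
    (Θ11 Θ12 Θ21 Θ22 : ℝ → Matrix (Fin k) (Fin k) ℝ)
    (hΘ : ∀ t : ℝ,
      NormedSpace.exp (t • Matrix.fromBlocks F Q S (-Fᵀ)) =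
        Matrix.fromBlocks (Θ11 t) (Θ12 t) (Θ21 t) (Θ22 t))
    (hY : ∀ t ∈ I, IsUnit (Θ21 t * P0 + Θ22 t))
    (P : ℝ → Matrix (Fin k) (Fin k) ℝ)
    (hP : ∀ t : ℝ, P t = (Θ11 t * P0 + Θ12 t) * (Θ21 t * P0 + Θ22 t)⁻¹) :
    P 0 = P0 ∧
      ∀ t ∈ I, HasDerivAt P (F * P t + P t * Fᵀ + Q - P t * S * P t) t :=
  riccati_lft_solution_general k F Q S P0 I Θ11 Θ12 Θ21 Θ22 hΘ hY P hP
end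

section
/- Let F, Q, S ∈ Mₙ(ℝ) with Q and S symmetric, let Λ = [[F, Q],[S, −Fᵀ]] ∈ M₂ₙ(ℝ), and for t ∈ ℝ write exp(tΛ) in n×n blocks as [[Θ₁₁(t), Θ₁₂(t)],[Θ₂₁(t), Θ₂₂(t)]]. Let P₀ ∈ Mₙ(ℝ) be symmetric and let I ⊆ ℝ be an open interval containing 0 on which Y(t) := Θ₂₁(t)P₀ + Θ₂₂(t) is invertible. Then the Riccati solution P(t) := (Θ₁₁(t)P₀ + Θ₁₂(t))·Y(t)⁻¹ is symmetric for every t ∈ I. -/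
/-!
`exp(tΛ)` is symplectic because `Λ` is Hamiltonian (skew-adjoint for the form `J`), and
symplectic matrices map Lagrangian subspaces to Lagrangian subspaces. The column space of
`[P₀; 1]` is Lagrangian exactly when `P₀` is symmetric, so its image `[X; Y] = exp(tΛ) [P₀; 1]`
is Lagrangian, i.e. `Xᵀ Y = Yᵀ X`; when `Y` is invertible this says that `X Y⁻¹` is symmetric.
-/

open Matrix

namespace Matrix

section Symplectic

variable {l m R : Type*} [DecidableEq l] [Fintype l] [CommRing R]

theorem transpose_fromRows_mul_J_mul_fromRows (X Y : Matrix l m R) :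
    (fromRows X Y)ᵀ * J l R * fromRows X Y = Yᵀ * X - Xᵀ * Y := by
  simp [J, transpose_fromRows, fromCols_mul_fromBlocks, fromCols_mul_fromRows]
  abel

theorem transpose_mul_J_mul_of_mem_symplecticGroup {M : Matrix (l ⊕ l) (l ⊕ l) R}
    (hM : M ∈ symplecticGroup l R) (N : Matrix (l ⊕ l) m R) :
    (M * N)ᵀ * J l R * (M * N) = Nᵀ * J l R * N := by
  calc (M * N)ᵀ * J l R * (M * N) = Nᵀ * (Mᵀ * J l R * M) * N := by
        simp only [transpose_mul, Matrix.mul_assoc]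
    _ = Nᵀ * J l R * N := by rw [SymplecticGroup.mem_iff'.mp hM]

theorem transpose_mul_comm_of_fromBlocks_mem_symplecticGroup {A B C D P : Matrix l l R}
    (hM : fromBlocks A B C D ∈ symplecticGroup l R) (hP : P.IsSymm) :
    (A * P + B)ᵀ * (C * P + D) = (C * P + D)ᵀ * (A * P + B) := by
  have hgraph : fromBlocks A B C D * fromRows P (1 : Matrix l l R) =
      fromRows (A * P + B) (C * P + D) := by
    rw [fromBlocks_mul_fromRows, mul_one, mul_one]
  have h := transpose_mul_J_mul_of_mem_symplecticGroup hM (fromRows P (1 : Matrix l l R))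
  rw [hgraph, transpose_fromRows_mul_J_mul_fromRows, transpose_fromRows_mul_J_mul_fromRows,
    hP.eq, transpose_one, one_mul, mul_one, sub_self, sub_eq_zero] at h
  exact h.symm

end Symplectic

theorem isSymm_mul_inv_of_transpose_mul_comm {n R : Type*} [Fintype n] [DecidableEq n]
    [CommRing R] {X Y : Matrix n n R} (hY : IsUnit Y) (h : Xᵀ * Y = Yᵀ * X) :
    (X * Y⁻¹).IsSymm := by
  have hYdet : IsUnit Y.det := (isUnit_iff_isUnit_det Y).mp hY
  have hYTdet : IsUnit Yᵀ.det := by rwa [det_transpose]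
  calc (X * Y⁻¹)ᵀ = Yᵀ⁻¹ * (Xᵀ * Y) * Y⁻¹ := by
        rw [transpose_mul, transpose_nonsing_inv, mul_assoc, mul_assoc,
          mul_nonsing_inv Y hYdet, mul_one]
    _ = X * Y⁻¹ := by rw [h, ← mul_assoc, nonsing_inv_mul _ hYTdet, one_mul]

section Hamiltonian

variable {l 𝔸 : Type*} [DecidableEq l] [Fintype l]

theorem fromBlocks_isSkewAdjoint_J [CommRing 𝔸] {F Q S : Matrix l l 𝔸}
    (hQ : Q.IsSymm) (hS : S.IsSymm) :
    (J l 𝔸).IsSkewAdjoint (fromBlocks F Q S (-Fᵀ)) := by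
  simp [Matrix.IsSkewAdjoint, Matrix.IsAdjointPair, J, fromBlocks_transpose, fromBlocks_neg,
    fromBlocks_multiply, hQ.eq, hS.eq]

theorem exp_mem_symplecticGroup [NormedCommRing 𝔸] [NormedAlgebra ℚ 𝔸] [CompleteSpace 𝔸]
    {A : Matrix (l ⊕ l) (l ⊕ l) 𝔸} (hA : (J l 𝔸).IsSkewAdjoint A) :
    NormedSpace.exp A ∈ symplecticGroup l 𝔸 := by
  have hJdet : IsUnit (J l 𝔸).det := isUnit_det_J l 𝔸
  have hAT : Aᵀ = J l 𝔸 * (-A) * (J l 𝔸)⁻¹ := by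
    rw [← hA, Matrix.mul_assoc, mul_nonsing_inv _ hJdet, Matrix.mul_one]
  have hexpT : (NormedSpace.exp A)ᵀ = J l 𝔸 * NormedSpace.exp (-A) * (J l 𝔸)⁻¹ := by
    rw [← exp_transpose, hAT, exp_conj _ _ ((isUnit_iff_isUnit_det _).mpr hJdet)]
  rw [SymplecticGroup.mem_iff', hexpT, exp_neg]
  have hexpdet : IsUnit (NormedSpace.exp A).det := (isUnit_iff_isUnit_det _).mp (isUnit_exp A)
  simp only [Matrix.mul_assoc, nonsing_inv_mul _ hJdet, nonsing_inv_mul _ hexpdet,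
    Matrix.mul_one]

end Hamiltonian

end Matrix

theorem riccati_solution_isSymm_general (k : ℕ) (F Q S P0 : Matrix (Fin k) (Fin k) ℝ)
    (hQ : Q.IsSymm) (hS : S.IsSymm) (hP0 : P0.IsSymm)
    (I : Set ℝ)
    (Θ11 Θ12 Θ21 Θ22 : ℝ → Matrix (Fin k) (Fin k) ℝ)
    (hΘ : ∀ t : ℝ,
      NormedSpace.exp (t • Matrix.fromBlocks F Q S (-Fᵀ)) =
        Matrix.fromBlocks (Θ11 t) (Θ12 t) (Θ21 t) (Θ22 t))
    (hY : ∀ t ∈ I, IsUnit (Θ21 t * P0 + Θ22 t)) :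
    ∀ t ∈ I, ((Θ11 t * P0 + Θ12 t) * (Θ21 t * P0 + Θ22 t)⁻¹).IsSymm := by
  intro t ht
  have hΛ : (J (Fin k) ℝ).IsSkewAdjoint (t • fromBlocks F Q S (-Fᵀ)) := by
    rw [← mem_skewAdjointMatricesSubmodule]
    exact Submodule.smul_mem _ t
      ((mem_skewAdjointMatricesSubmodule _ _).mpr (fromBlocks_isSkewAdjoint_J hQ hS))
  have hsymp := exp_mem_symplecticGroup hΛ
  rw [hΘ t] at hsymp
  exact isSymm_mul_inv_of_transpose_mul_comm (hY t ht)
    (transpose_mul_comm_of_fromBlocks_mem_symplecticGroup hsymp hP0)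

theorem riccati_solution_isSymm (k : ℕ) (F Q S P0 : Matrix (Fin k) (Fin k) ℝ)
    (hQ : Q.IsSymm) (hS : S.IsSymm) (hP0 : P0.IsSymm)
    (I : Set ℝ) (hIopen : IsOpen I) (hIconn : I.OrdConnected) (h0I : (0 : ℝ) ∈ I)
    (Θ11 Θ12 Θ21 Θ22 : ℝ → Matrix (Fin k) (Fin k) ℝ)
    (hΘ : ∀ t : ℝ,
      NormedSpace.exp (t • Matrix.fromBlocks F Q S (-Fᵀ)) =
        Matrix.fromBlocks (Θ11 t) (Θ12 t) (Θ21 t) (Θ22 t))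
    (hY : ∀ t ∈ I, IsUnit (Θ21 t * P0 + Θ22 t)) :
    ∀ t ∈ I, ((Θ11 t * P0 + Θ12 t) * (Θ21 t * P0 + Θ22 t)⁻¹).IsSymm :=
  riccati_solution_isSymm_general k F Q S P0 hQ hS hP0 I Θ11 Θ12 Θ21 Θ22 hΘ hY
end

section
/- Let M, N ∈ M₂ₙ(ℝ) with n×n blocks M = [[M₁₁, M₁₂],[M₂₁, M₂₂]] and N = [[N₁₁, N₁₂],[N₂₁, N₂₂]], and let P ∈ Mₙ(ℝ). Suppose Y_N := N₂₁P + N₂₂ is invertible and Y := (MN)₂₁P + (MN)₂₂ is invertible, where (MN)ᵢⱼ denote the blocks of the product MN. Set T_N(P) := (N₁₁P + N₁₂)·Y_N⁻¹. Then M₂₁·T_N(P) + M₂₂ is invertible and ((MN)₁₁P + (MN)₁₂)·Y⁻¹ = (M₁₁·T_N(P) + M₁₂)·(M₂₁·T_N(P) + M₂₂)⁻¹, i.e. T_{MN}(P) = T_M(T_N(P)). -/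
open Matrix

theorem lft_comp (k : ℕ) (M N : Matrix (Fin k ⊕ Fin k) (Fin k ⊕ Fin k) ℝ)
    (P : Matrix (Fin k) (Fin k) ℝ)
    (hYN : IsUnit (N.toBlocks₂₁ * P + N.toBlocks₂₂))
    (hY : IsUnit ((M * N).toBlocks₂₁ * P + (M * N).toBlocks₂₂)) :
    IsUnit (M.toBlocks₂₁ *
        ((N.toBlocks₁₁ * P + N.toBlocks₁₂) * (N.toBlocks₂₁ * P + N.toBlocks₂₂)⁻¹) +
        M.toBlocks₂₂) ∧
      ((M * N).toBlocks₁₁ * P + (M * N).toBlocks₁₂) *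
          ((M * N).toBlocks₂₁ * P + (M * N).toBlocks₂₂)⁻¹ =
        (M.toBlocks₁₁ *
            ((N.toBlocks₁₁ * P + N.toBlocks₁₂) * (N.toBlocks₂₁ * P + N.toBlocks₂₂)⁻¹) +
            M.toBlocks₁₂) *
          (M.toBlocks₂₁ *
              ((N.toBlocks₁₁ * P + N.toBlocks₁₂) * (N.toBlocks₂₁ * P + N.toBlocks₂₂)⁻¹) +
              M.toBlocks₂₂)⁻¹ := by
  set A := M.toBlocks₁₁; set B := M.toBlocks₁₂; set C := M.toBlocks₂₁; set D := M.toBlocks₂₂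
  set E := N.toBlocks₁₁; set F := N.toBlocks₁₂; set G := N.toBlocks₂₁; set H := N.toBlocks₂₂
  have hMN : M * N = fromBlocks (A*E + B*G) (A*F + B*H) (C*E + D*G) (C*F + D*H) := by
    rw [← M.fromBlocks_toBlocks, ← N.fromBlocks_toBlocks, fromBlocks_multiply]
  simp only [hMN, toBlocks_fromBlocks₁₁, toBlocks_fromBlocks₁₂, toBlocks_fromBlocks₂₁,
    toBlocks_fromBlocks₂₂] at hY ⊢
  set XN := E * P + F with hXN
  set YN := G * P + H with hYNdef
  have h1 : (C*E + D*G) * P + (C*F + D*H) = C * XN + D * YN := by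
    simp only [hXN, hYNdef]; noncomm_ring
  have h2 : (A*E + B*G) * P + (A*F + B*H) = A * XN + B * YN := by
    simp only [hXN, hYNdef]; noncomm_ring
  rw [h1] at hY
  have hYNdet : IsUnit YN.det := (isUnit_iff_isUnit_det _).mp hYN
  have hYdet : IsUnit (C * XN + D * YN).det := (isUnit_iff_isUnit_det _).mp hY
  have hden : C * (XN * YN⁻¹) + D = (C * XN + D * YN) * YN⁻¹ := by
    have e1 : (C * XN + D * YN) * YN⁻¹ = C * (XN * YN⁻¹) + D * (YN * YN⁻¹) := by noncomm_ring
    rw [e1, mul_nonsing_inv _ hYNdet, mul_one]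
  have hnum : A * (XN * YN⁻¹) + B = (A * XN + B * YN) * YN⁻¹ := by
    have e1 : (A * XN + B * YN) * YN⁻¹ = A * (XN * YN⁻¹) + B * (YN * YN⁻¹) := by noncomm_ring
    rw [e1, mul_nonsing_inv _ hYNdet, mul_one]
  constructor
  · rw [hden]
    exact hY.mul (isUnit_nonsing_inv_iff.mpr hYN)
  · rw [h1, h2, hden, hnum, Matrix.mul_inv_rev, nonsing_inv_nonsing_inv _ hYNdet,
      Matrix.mul_assoc, ← Matrix.mul_assoc YN⁻¹, nonsing_inv_mul _ hYNdet, one_mul]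
end
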